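/- In the Pascal automaton P_{p,R} with state set (ℤ/pℤ) × (ℤ/ψℤ), initial state (0,0), and transitions δ((s,t), a) = (s + a·b^t, t+1) for digits a < b, the run of a word u (LSDF) starting from state (s,t) ends in the state (s + (val(u) mod p)·b^t, t + (|u| mod ψ)). In particular, the run of u from (0,0) ends in (val(u) mod p, |u| mod ψ). -/

import Mathlib

/-- LSDF value of a word of digits in base `b`. -/
def wval (b : ℕ) : List ℕ → ℕ
  | [] => 0
  | a :: u => a + b * wval b u

/-- One transition of the Pascal automaton: `δ((s,t),a) = (s + a·b^t, t+1)`. -/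
def pstep (b p ψ : ℕ) (x : ZMod p × ZMod ψ) (a : ℕ) : ZMod p × ZMod ψ :=
  (x.1 + (a : ZMod p) * (b : ZMod p) ^ x.2.val, x.2 + 1)

/-- The run of a word in the Pascal automaton, `δ((s,t), v·a) = δ(δ((s,t),v), a)`. -/
def prun (b p ψ : ℕ) (x : ZMod p × ZMod ψ) (u : List ℕ) : ZMod p × ZMod ψ :=
  u.foldl (pstep b p ψ) x

/-! Each transition adds `a · b^t` to the first coordinate, and `b^t` only depends on `t` modulo
`ψ` because `b^ψ = 1` in `ZMod p`. Hence reading `a :: u` from `(s, t)` amounts to reading `u`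
from `(s + a·b^t, t + 1)`, and induction on `u` with `val (a :: u) = a + b · val u` gives the
closed form. -/

lemma pow_val_add_one {M : Type*} [Monoid M] {n : ℕ} [NeZero n] {g : M} (hg : g ^ n = 1)
    (t : ZMod n) : g ^ (t + 1).val = g ^ t.val * g := by
  rw [ZMod.val_add, ZMod.val_one_eq_one_mod, Nat.add_mod_mod, ← pow_eq_pow_mod _ hg, pow_succ]

lemma prun_cons (b p ψ : ℕ) (x : ZMod p × ZMod ψ) (a : ℕ) (u : List ℕ) :
    prun b p ψ x (a :: u) = prun b p ψ (pstep b p ψ x a) u :=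
  rfl

lemma prun_eq {b p ψ : ℕ} [NeZero ψ] (hψ1 : (b : ZMod p) ^ ψ = 1) (u : List ℕ) (s : ZMod p)
    (t : ZMod ψ) :
    prun b p ψ (s, t) u = (s + (wval b u : ZMod p) * (b : ZMod p) ^ t.val, t + u.length) := by
  induction u generalizing s t with
  | nil => simp [prun, wval]
  | cons a u ih =>
    rw [prun_cons, pstep, ih, pow_val_add_one hψ1]
    simp only [wval, List.length_cons, Prod.mk.injEq]
    push_cast
    constructor <;> ring

theorem stmt_16_general (b p ψ : ℕ)
    (hψ : 0 < ψ) (hψ1 : b ^ ψ ≡ 1 [MOD p])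
    (u : List ℕ) :
    (∀ (s : ZMod p) (t : ZMod ψ),
        prun b p ψ (s, t) u =
          (s + ((wval b u : ZMod p)) * (b : ZMod p) ^ t.val,
            t + (u.length : ZMod ψ))) ∧
    prun b p ψ (0, 0) u = ((wval b u : ZMod p), (u.length : ZMod ψ)) := by
  have : NeZero ψ := ⟨hψ.ne'⟩
  have hone : (b : ZMod p) ^ ψ = 1 := by
    exact_mod_cast (ZMod.natCast_eq_natCast_iff _ _ _).mpr hψ1
  refine ⟨prun_eq hone u, ?_⟩
  simp [prun_eq hone]

theorem stmt_16 (b p ψ : ℕ) (hb : 2 ≤ b) (hp : 1 ≤ p) (hco : Nat.Coprime b p)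
    (hψ : 0 < ψ) (hψ1 : b ^ ψ ≡ 1 [MOD p])
    (hψmin : ∀ j, 0 < j → b ^ j ≡ 1 [MOD p] → ψ ≤ j)
    (u : List ℕ) (hu : ∀ d ∈ u, d < b) :
    (∀ (s : ZMod p) (t : ZMod ψ),
        prun b p ψ (s, t) u =
          (s + ((wval b u : ZMod p)) * (b : ZMod p) ^ t.val,
            t + (u.length : ZMod ψ))) ∧
    prun b p ψ (0, 0) u = ((wval b u : ZMod p), (u.length : ZMod ψ)) :=
  stmt_16_general b p ψ hψ hψ1 u
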